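/- arXiv:math/0602157 — 3 statements merged into one kernel-verified Lean document; each statement's English description precedes it below -/
import Mathlib

section
/- Let R be a commutative F_q-algebra and f(X) ∈ R[X] a polynomial such that f(x+y) = f(x) + f(y) and f(λx) = λf(x) hold identically (as polynomial identities in R[X,Y], resp. for all λ ∈ F_q). Then every coefficient a_i of f with index i not a power of q vanishes, i.e., f(X) = Σ a_{q^n} X^{q^n}. -/
/-!
Write `a_i` for the coefficients of `f` and `p^m = q` with `p` the characteristic of `F_q`.
Comparing coefficients of `X^j Y^(i-j)` in `f(X+Y) = f(X) + f(Y)` gives `C(i,j) a_i = 0` for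
`0 < j < i`, and comparing coefficients of `X^i` in `f(λX) = λ f(X)` gives `(λ^i - λ) a_i = 0`;
nonzero scalars of `F_q` act invertibly on `R`. If `i > 0` is not a power of `p`, write
`i = p^v u` with `p ∤ u`; by Lucas, `C(i, p^v) ≡ u ≢ 0 (mod p)`. If `i = p^k` is not a power of
`q`, then `m ∤ k`, so `p^m - 1 ∤ p^k - 1` and, `F_q^×` being cyclic of order `q - 1`, some `λ`
has `λ^i ≠ λ`. Finally `a_0 = 0` by taking `λ = 0`.
-/

open Polynomial

theorem Nat.Prime.exists_not_dvd_choose_of_forall_ne_pow {p i : ℕ} (hp : p.Prime) (hi : i ≠ 0)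
    (hpow : ∀ k, i ≠ p ^ k) : ∃ j, j ≠ 0 ∧ j < i ∧ ¬p ∣ i.choose j := by
  have : Fact p.Prime := ⟨hp⟩
  set u := ordCompl[p] i
  have hi_eq : ordProj[p] i * u = i := Nat.ordProj_mul_ordCompl_eq_self i p
  have hu : ¬p ∣ u := Nat.not_dvd_ordCompl hp hi
  have hu1 : 1 < u := by
    have hu0 : u ≠ 0 := by rintro h; rw [h, mul_zero] at hi_eq; exact hi hi_eq.symm
    have hu1 : u ≠ 1 := by rintro h; exact hpow _ (by rw [← hi_eq, h, mul_one])
    exact Nat.one_lt_iff_ne_zero_and_ne_one.mpr ⟨hu0, hu1⟩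
  refine ⟨ordProj[p] i, pow_ne_zero _ hp.ne_zero, ?_, ?_⟩
  · calc ordProj[p] i = ordProj[p] i * 1 := (mul_one _).symm
      _ < ordProj[p] i * u := Nat.mul_lt_mul_of_pos_left hu1 (pow_pos hp.pos _)
      _ = i := hi_eq
  · have hlucas := Choose.choose_pow_mul_pow_mul_modEq_choose_nat (p := p)
      (k := i.factorization p) (a := u) (b := 1)
    rw [hi_eq, mul_one, Nat.choose_one_right] at hlucas
    rwa [hlucas.dvd_iff dvd_rfl]

theorem FiniteField.exists_pow_card_eq_of_forall_pow_eq_self {K : Type*} [Field K] [Fintype K]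
    {p : ℕ} [CharP K p] {k : ℕ} (h : ∀ c : K, c ^ p ^ k = c) :
    ∃ n, p ^ k = Fintype.card K ^ n := by
  obtain ⟨m, hp, hcard⟩ := FiniteField.card K p
  have hdvd : p ^ (m : ℕ) - 1 ∣ p ^ k - 1 := by
    rw [← hcard, ← FiniteField.forall_pow_eq_one_iff]
    intro x
    have hx : x ^ p ^ k = x := Units.ext (by push_cast; exact h x)
    rw [pow_sub x (Nat.one_le_pow _ _ hp.pos), hx, pow_one, mul_inv_cancel]
  have hgcd := Nat.pow_sub_one_gcd_pow_sub_one p m k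
  rw [Nat.gcd_eq_left hdvd, eq_comm] at hgcd
  have hmk : (m : ℕ) ∣ k := by
    refine Nat.gcd_eq_left_iff_dvd.mp (Nat.pow_right_injective hp.two_le ?_)
    have := Nat.one_le_pow ((m : ℕ).gcd k) p hp.pos
    have := Nat.one_le_pow m p hp.pos
    simp only
    omega
  obtain ⟨n, rfl⟩ := hmk
  exact ⟨n, by rw [hcard, pow_mul]⟩

namespace Polynomial

theorem pow_sub_mul_coeff_eq_zero_of_comp_C_mul_X {R : Type*} [CommRing R] {f : R[X]} {r : R}
    (h : f.comp (C r * X) = C r * f) (i : ℕ) : (r ^ i - r) * f.coeff i = 0 := by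
  have hi := congrArg (coeff · i) h
  simp only [comp_C_mul_X_coeff, coeff_C_mul] at hi
  rw [sub_mul, mul_comm, hi, sub_self]

theorem hasseDeriv_map {R S : Type*} [Semiring R] [Semiring S] (φ : R →+* S) (f : R[X])
    (j : ℕ) : hasseDeriv j (f.map φ) = (hasseDeriv j f).map φ := by
  ext1 n
  simp [hasseDeriv_coeff]

variable {R : Type*} [CommSemiring R]

def IsAdditive (f : R[X]) : Prop :=
  aeval (MvPolynomial.X 0 + MvPolynomial.X 1 : MvPolynomial (Fin 2) R) f =
    aeval (MvPolynomial.X 0 : MvPolynomial (Fin 2) R) f +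
      aeval (MvPolynomial.X 1 : MvPolynomial (Fin 2) R) f

namespace IsAdditive

variable {f : R[X]}

/-- In `R[X][X]` the inner variable `C X` plays `X` and the outer `X` plays `Y`, so `f(X + Y)`
becomes the Taylor shift of `f.map C` by `X`. -/
theorem taylor_X_map_C (hf : f.IsAdditive) : taylor X (f.map C) = C f + f.map C := by
  have h := congrArg (MvPolynomial.aeval ![C X, (X : R[X][X])]) hf
  simp only [map_add, ← aeval_algHom_apply, MvPolynomial.aeval_X, Matrix.cons_val_zero,
    Matrix.cons_val_one] at h
  have hC : aeval (C X : R[X][X]) f = C f := by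
    rw [← algebraMap_eq (R := R[X]), aeval_algebraMap_apply, aeval_X_left_apply]
  have hX : aeval (X : R[X][X]) f = f.map C := rfl
  rw [hC, hX, add_comm (C X)] at h
  rw [← h, taylor_apply, comp, eval₂_map, aeval_def]
  rfl

theorem hasseDeriv_eq (hf : f.IsAdditive) {j : ℕ} (hj : j ≠ 0) :
    hasseDeriv j f = C (f.coeff j) := by
  have h := congrArg (coeff · j) hf.taylor_X_map_C
  simpa [taylor_coeff, hasseDeriv_map, eval_map, eval₂_C_X, coeff_C, hj] using h

theorem choose_mul_coeff_eq_zero (hf : f.IsAdditive) {i j : ℕ} (hj : j ≠ 0) (hji : j < i) :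
    (i.choose j : R) * f.coeff i = 0 := by
  have h := congrArg (coeff · (i - j)) (hf.hasseDeriv_eq hj)
  simpa [hasseDeriv_coeff, Nat.sub_add_cancel hji.le, coeff_C, (Nat.sub_pos_of_lt hji).ne']
    using h

end IsAdditive

end Polynomial

/-- An additive, `F_q`-linear polynomial over a commutative
`F_q`-algebra `R` has all its coefficients supported on `q`-power indices. -/
theorem additive_linear_poly_coeffs
    (Fq : Type*) [Field Fq] [Fintype Fq] (q : ℕ) (hq : q = Fintype.card Fq)
    (R : Type*) [CommRing R] [Algebra Fq R] (f : R[X])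
    (hadd : Polynomial.aeval
        ((MvPolynomial.X 0 + MvPolynomial.X 1 : MvPolynomial (Fin 2) R)) f =
      Polynomial.aeval (MvPolynomial.X 0 : MvPolynomial (Fin 2) R) f +
        Polynomial.aeval (MvPolynomial.X 1 : MvPolynomial (Fin 2) R) f)
    (hlin : ∀ l : Fq,
      f.comp (Polynomial.C (algebraMap Fq R l) * Polynomial.X) =
        Polynomial.C (algebraMap Fq R l) * f) :
    ∀ i : ℕ, (∀ n : ℕ, i ≠ q ^ n) → f.coeff i = 0 := by
  intro i hi
  obtain ⟨p, _⟩ := CharP.exists Fq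
  obtain ⟨-, hp, -⟩ := FiniteField.card Fq p
  have hcancel (c : Fq) (hc : c ≠ 0) (h : algebraMap Fq R c * f.coeff i = 0) : f.coeff i = 0 :=
    (smul_eq_zero_iff_right hc).mp (by rwa [Algebra.smul_def])
  have hlin_i (c : Fq) : algebraMap Fq R (c ^ i - c) * f.coeff i = 0 := by
    simpa using pow_sub_mul_coeff_eq_zero_of_comp_C_mul_X (hlin c) i
  by_cases hpow : ∃ k, i = p ^ k
  · obtain ⟨k, rfl⟩ := hpow
    obtain ⟨c, hc⟩ : ∃ c : Fq, c ^ p ^ k ≠ c := by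
      by_contra! h
      obtain ⟨n, hn⟩ := FiniteField.exists_pow_card_eq_of_forall_pow_eq_self h
      exact hi n (hq ▸ hn)
    exact hcancel _ (sub_ne_zero.mpr hc) (hlin_i c)
  rcases eq_or_ne i 0 with rfl | hi0
  · simpa using hlin_i 0
  obtain ⟨j, hj0, hji, hdvd⟩ := hp.exists_not_dvd_choose_of_forall_ne_pow hi0
    fun k hk ↦ hpow ⟨k, hk⟩
  refine hcancel (i.choose j) ?_ ?_
  · rwa [Ne, CharP.cast_eq_zero_iff Fq p]
  · simpa using (show f.IsAdditive from hadd).choose_mul_coeff_eq_zero hj0 hji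
end

section
/- Let R be a commutative F_q-algebra and ξ = x_0 + x_1 τ + ⋯ + x_m τ^m an element of the twisted polynomial ring R{τ}. If for some n the coefficient x_n is a unit of R and all x_i with i > n are nilpotent, then the corresponding R-algebra map R[X] → R[X], X ↦ Σ x_i X^{q^i}, makes R[X] a free module of rank q^n over itself; in particular the induced map of schemes is finite and flat of degree q^n. -/
/-!
Split `f = p + e` with `p = ∑_{i ≤ n} xᵢ X^{qⁱ}`, whose coefficient of `X^{qⁿ}` is a unit and which
has no higher terms, and `e` with coefficients in a nilpotent ideal `N`. For such a `p` and
`d = qⁿ` the map `c ↦ ∑_{i<d} cᵢ(p) Xⁱ` is bijective: it is surjective because `X^d` is a unit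
times `p` modulo lower terms, and injective because the terms `cᵢ(p) Xⁱ` have pairwise distinct
degrees `d · deg cᵢ + i`. As `p` keeps these properties over every `R ⧸ I`, the maps for `f` and
`p` differ by something landing in `N • ⊤`, and bijectivity passes from `p` to `f` by running
through the `N`-adic filtration, which stops since `N ^ K = 0`.
-/

open Polynomial

namespace Submodule

variable {R M : Type*} [CommRing R] [AddCommGroup M] [Module R M] {N : Ideal R}

theorem eq_top_of_sup_smul_top_eq_top_of_isNilpotent {V : Submodule R M} (hN : IsNilpotent N)
    (hV : V ⊔ N • ⊤ = ⊤) : V = ⊤ := by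
  obtain ⟨K, hK⟩ := hN
  have h : ∀ k, V ⊔ N ^ k • ⊤ = ⊤ := by
    intro k
    induction k with
    | zero => simp
    | succ k ih =>
      refine top_le_iff.mp ?_
      calc ⊤ = V ⊔ N ^ k • (V ⊔ N • ⊤) := by rw [hV, ih]
        _ = V ⊔ (N ^ k • V ⊔ N ^ (k + 1) • ⊤) := by
          rw [smul_sup, pow_succ, ← Ideal.smul_eq_mul, smul_assoc]
        _ ≤ V ⊔ N ^ (k + 1) • ⊤ := by
          rw [← sup_assoc]
          exact sup_le_sup_right (sup_le le_rfl Submodule.smul_le_right) _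
  simpa [hK] using h K

end Submodule

namespace LinearMap

variable {R M M' : Type*} [CommRing R] [AddCommGroup M] [Module R M] [AddCommGroup M']
  [Module R M'] {N : Ideal R} {Φ Ψ : M →ₗ[R] M'}

theorem surjective_of_range_sub_le_smul_top (hN : IsNilpotent N) (hΨ : Function.Surjective Ψ)
    (hΦΨ : range (Φ - Ψ) ≤ N • ⊤) : Function.Surjective Φ := by
  rw [← range_eq_top]
  refine Submodule.eq_top_of_sup_smul_top_eq_top_of_isNilpotent hN (Submodule.eq_top_iff'.mpr ?_)
  intro y
  obtain ⟨m, rfl⟩ := hΨ y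
  rw [show Ψ m = Φ m - (Φ - Ψ) m by simp]
  exact sub_mem (Submodule.mem_sup_left (mem_range_self Φ m))
    (Submodule.mem_sup_right (hΦΨ (mem_range_self _ m)))

theorem injective_of_range_sub_le_smul_top (hN : IsNilpotent N)
    (hΨ : ∀ (k : ℕ) (m : M), Ψ m ∈ N ^ k • (⊤ : Submodule R M') → m ∈ N ^ k • (⊤ : Submodule R M))
    (hΦΨ : range (Φ - Ψ) ≤ N • ⊤) : Function.Injective Φ := by
  obtain ⟨K, hK⟩ := hN
  rw [← ker_eq_bot, eq_bot_iff]
  intro m hm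
  have h : ∀ k, m ∈ N ^ k • (⊤ : Submodule R M) := by
    intro k
    induction k with
    | zero => simp
    | succ k ih =>
      refine hΨ _ _ ?_
      have hΨm : Ψ m = -((Φ - Ψ) m) := by simp [mem_ker.mp hm]
      have hmem : (Φ - Ψ) m ∈ (N ^ k • ⊤ : Submodule R M).map (Φ - Ψ) :=
        Submodule.mem_map_of_mem ih
      rw [Submodule.map_smul'', Submodule.map_top] at hmem
      rw [hΨm, pow_succ, ← Ideal.smul_eq_mul, Submodule.smul_assoc]
      exact neg_mem (smul_mono_right _ hΦΨ hmem)
  simpa [hK] using h K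

end LinearMap

namespace Polynomial

variable {R : Type*} [CommRing R]

noncomputable def sumAevalMulXPow (p : R[X]) (d : ℕ) : (Fin d → R[X]) →ₗ[R] R[X] where
  toFun c := ∑ i, aeval p (c i) * X ^ (i : ℕ)
  map_add' c c' := by simp [add_mul, Finset.sum_add_distrib]
  map_smul' a c := by simp [Finset.smul_sum]

variable {p : R[X]} {d : ℕ}

theorem sumAevalMulXPow_apply (c : Fin d → R[X]) :
    sumAevalMulXPow p d c = ∑ i, aeval p (c i) * X ^ (i : ℕ) := rfl

theorem sumAevalMulXPow_X_mul (c : Fin d → R[X]) :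
    sumAevalMulXPow p d (fun i => X * c i) = p * sumAevalMulXPow p d c := by
  simp only [sumAevalMulXPow_apply, map_mul, aeval_X, Finset.mul_sum, mul_assoc]

theorem sumAevalMulXPow_single (i : Fin d) :
    sumAevalMulXPow p d (Pi.single i 1) = X ^ (i : ℕ) := by
  rw [sumAevalMulXPow_apply, Finset.sum_eq_single i (fun j _ hj => by simp [hj]) (by simp)]
  simp

theorem map_sumAevalMulXPow {S : Type*} [CommRing S] (φ : R →+* S) (c : Fin d → R[X]) :
    (sumAevalMulXPow p d c).map φ = sumAevalMulXPow (p.map φ) d (fun i => (c i).map φ) := by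
  simp only [sumAevalMulXPow_apply, Polynomial.map_sum, Polynomial.map_mul, Polynomial.map_pow,
    map_X, ← comp_eq_aeval, map_comp]

theorem degreeLT_le_of_X_pow_mem {V : Submodule R R[X]} {t : ℕ} (hV : ∀ s < t, X ^ s ∈ V) :
    degreeLT R t ≤ V := by
  classical
  rw [degreeLT_eq_span_X_pow, Submodule.span_le]
  simpa [Set.subset_def] using hV

theorem surjective_sumAevalMulXPow (hd : 0 < d) (hu : IsUnit (p.coeff d)) (hp : p.natDegree ≤ d) :
    Function.Surjective (sumAevalMulXPow p d) := by
  obtain ⟨u, hu⟩ := hu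
  set V := LinearMap.range (sumAevalMulXPow p d)
  suffices hX : ∀ t, X ^ t ∈ V by
    intro g
    exact degreeLT_le_of_X_pow_mem (fun s _ => hX s)
      (mem_degreeLT.mpr (degree_le_natDegree.trans_lt (by exact_mod_cast g.natDegree.lt_succ_self)))
  intro t
  induction t using Nat.strong_induction_on with
  | _ t ih =>
  rcases lt_or_ge t d with ht | ht
  · exact ⟨Pi.single ⟨t, ht⟩ 1, sumAevalMulXPow_single _⟩
  have hshift : p * X ^ (t - d) ∈ V := by
    obtain ⟨c, hc⟩ := ih (t - d) (by omega)
    exact ⟨fun i => X * c i, by rw [sumAevalMulXPow_X_mul, hc]⟩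
  have hlower : X ^ (t - d) * (p - C (u : R) * X ^ d) ∈ V := by
    refine degreeLT_le_of_X_pow_mem ih (mem_degreeLT.mpr ?_)
    rw [degree_lt_iff_coeff_zero]
    intro s hs
    rw [coeff_X_pow_mul', if_pos (by omega), coeff_sub, coeff_C_mul_X_pow]
    rcases eq_or_lt_of_le (show d ≤ s - (t - d) by omega) with hds | hds
    · rw [← hds, if_pos rfl, hu, sub_self]
    · rw [coeff_eq_zero_of_natDegree_lt (hp.trans_lt hds), if_neg hds.ne', sub_zero]
  have hXt : (X : R[X]) ^ t = X ^ (t - d) * X ^ d := by rw [← pow_add, Nat.sub_add_cancel ht]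
  have hinv : C (↑u⁻¹ : R) * C (u : R) = 1 := by rw [← C_mul, Units.inv_mul, C_1]
  have hsplit : (X : R[X]) ^ t =
      (↑u⁻¹ : R) • (p * X ^ (t - d)) - (↑u⁻¹ : R) • (X ^ (t - d) * (p - C (u : R) * X ^ d)) := by
    rw [smul_eq_C_mul, smul_eq_C_mul]
    linear_combination hXt - X ^ (t - d) * X ^ d * hinv
  rw [hsplit]
  exact sub_mem (V.smul_mem _ hshift) (V.smul_mem _ hlower)

theorem degree_aeval_of_isUnit_leadingCoeff {g : R[X]} (hp : IsUnit p.leadingCoeff)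
    (hp0 : p.natDegree ≠ 0) (hg : g ≠ 0) :
    (aeval p g).degree = (g.natDegree * p.natDegree : ℕ) := by
  rw [← comp_eq_aeval]
  refine degree_eq_of_le_of_coeff_ne_zero (degree_le_of_natDegree_le natDegree_comp_le) ?_
  rw [coeff_comp_degree_mul_degree hp0, (hp.pow _).mul_left_eq_zero.ne]
  exact leadingCoeff_ne_zero.mpr hg

theorem injective_sumAevalMulXPow (hd : 0 < d) (hu : IsUnit (p.coeff d)) (hp : p.natDegree ≤ d) :
    Function.Injective (sumAevalMulXPow p d) := by
  rcases subsingleton_or_nontrivial R with _ | _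
  · exact fun _ _ _ => Subsingleton.elim _ _
  have hpd : p.natDegree = d := le_antisymm hp (le_natDegree_of_ne_zero hu.ne_zero)
  have hlc : IsUnit p.leadingCoeff := by rwa [leadingCoeff, hpd]
  rw [← LinearMap.ker_eq_bot, LinearMap.ker_eq_bot']
  intro c hc
  by_contra hne
  obtain ⟨i₀, hi₀⟩ := Function.ne_iff.mp hne
  have hdeg : ∀ i, c i ≠ 0 →
      (aeval p (c i) * X ^ (i : ℕ)).degree = (((c i).natDegree * d + i : ℕ) : WithBot ℕ) := by
    intro i hi
    rw [degree_mul_X_pow, degree_aeval_of_isUnit_leadingCoeff hlc (by omega) hi, hpd]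
    push_cast; rfl
  have hsum := degree_sum_eq_of_disjoint (fun i => aeval p (c i) * X ^ (i : ℕ)) Finset.univ ?_
  · rw [← sumAevalMulXPow_apply, hc, degree_zero, eq_comm, Finset.sup_eq_bot_iff] at hsum
    exact WithBot.coe_ne_bot ((hdeg i₀ hi₀).symm.trans (hsum i₀ (Finset.mem_univ _)))
  rintro i ⟨-, hi⟩ j ⟨-, hj⟩ hij hij'
  have hci : c i ≠ 0 := fun h => hi (by simp [h])
  have hcj : c j ≠ 0 := fun h => hj (by simp [h])
  simp only [Function.comp_apply, hdeg i hci, hdeg j hcj, Nat.cast_inj] at hij'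
  have hmod := congrArg (· % d) hij'
  simp only [Nat.mul_add_mod_of_lt i.isLt, Nat.mul_add_mod_of_lt j.isLt] at hmod
  exact hij (Fin.ext hmod)

theorem mem_smul_top_iff_map_eq_zero (I : Ideal R) (g : R[X]) :
    g ∈ I • (⊤ : Submodule R R[X]) ↔ g.map (Ideal.Quotient.mk I) = 0 := by
  simp only [Ideal.smul_top_eq_map, Submodule.restrictScalars_mem, algebraMap_eq,
    Ideal.mem_map_C_iff, Polynomial.ext_iff, coeff_map, coeff_zero, Ideal.Quotient.eq_zero_iff_mem]

theorem mem_smul_top_of_sumAevalMulXPow_mem (hd : 0 < d) (hu : IsUnit (p.coeff d))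
    (hp : p.natDegree ≤ d) (I : Ideal R) {c : Fin d → R[X]}
    (hc : sumAevalMulXPow p d c ∈ I • (⊤ : Submodule R R[X])) :
    c ∈ I • (⊤ : Submodule R (Fin d → R[X])) := by
  have hinj := injective_sumAevalMulXPow (p := p.map (Ideal.Quotient.mk I)) hd
    (by rw [coeff_map]; exact hu.map _) (natDegree_map_le.trans hp)
  have hc0 : ∀ i, (c i).map (Ideal.Quotient.mk I) = 0 := by
    rw [mem_smul_top_iff_map_eq_zero, map_sumAevalMulXPow, ← map_zero (sumAevalMulXPow _ d)] at hc
    exact congrFun (hinj hc)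
  rw [← Finset.univ_sum_single c]
  refine Submodule.sum_mem _ fun i _ => ?_
  have hsingle : (I • ⊤ : Submodule R R[X]).map (LinearMap.single R (fun _ => R[X]) i) ≤ I • ⊤ := by
    rw [Submodule.map_smul'']
    exact smul_mono_right _ le_top
  exact hsingle ⟨c i, (mem_smul_top_iff_map_eq_zero I _).mpr (hc0 i), rfl⟩

theorem range_sumAevalMulXPow_sub_le {f : R[X]} {N : Ideal R} (hfp : f - p ∈ N.map C) :
    LinearMap.range (sumAevalMulXPow f d - sumAevalMulXPow p d) ≤ N • ⊤ := by
  rintro _ ⟨c, rfl⟩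
  rw [Ideal.smul_top_eq_map, Submodule.restrictScalars_mem, algebraMap_eq, LinearMap.sub_apply,
    sumAevalMulXPow_apply, sumAevalMulXPow_apply, ← Finset.sum_sub_distrib]
  refine Ideal.sum_mem _ fun i _ => ?_
  rw [← sub_mul]
  refine Ideal.mul_mem_right _ _ (Ideal.mem_of_dvd _ ?_ hfp)
  simpa only [aeval_def, eval₂_eq_eval_map, algebraMap_eq] using sub_dvd_eval_sub f p ((c i).map C)

theorem bijective_sumAevalMulXPow_of_sub_mem {f : R[X]} {N : Ideal R} (hd : 0 < d)
    (hu : IsUnit (p.coeff d)) (hp : p.natDegree ≤ d) (hN : IsNilpotent N) (hfp : f - p ∈ N.map C) :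
    Function.Bijective (sumAevalMulXPow f d) :=
  ⟨LinearMap.injective_of_range_sub_le_smul_top hN
      (fun k _ => mem_smul_top_of_sumAevalMulXPow_mem hd hu hp (N ^ k))
      (range_sumAevalMulXPow_sub_le hfp),
    LinearMap.surjective_of_range_sub_le_smul_top hN (surjective_sumAevalMulXPow hd hu hp)
      (range_sumAevalMulXPow_sub_le hfp)⟩

end Polynomial

/-- If `ξ = Σ xᵢ τ^i ∈ R{τ}` has `xₙ` a unit and all `xᵢ`, `i > n`,
nilpotent, then the `R`-algebra endomorphism of `R[X]` sending `X` to the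
additive polynomial `f = Σ xᵢ X^{qⁱ}` makes `R[X]` a free module of rank `qⁿ`
over itself; in particular the induced map of schemes is finite flat of degree `qⁿ`.
Freeness of rank `qⁿ` over the image is expressed by a basis `b` with unique
representation of every `g ∈ R[X]` as `g = Σ (aeval f) (c i) * b i`. -/
theorem finite_flat_of_unit_leading_nilpotent_tail
    (Fq : Type*) [Field Fq] [Fintype Fq] (q : ℕ) (hq : q = Fintype.card Fq)
    (R : Type*) [CommRing R] [Algebra Fq R]
    (m n : ℕ) (x : ℕ → R) (hxn : IsUnit (x n))
    (hnil : ∀ i, n < i → IsNilpotent (x i))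
    (f : R[X]) (hf : f = ∑ i ∈ Finset.range (m + 1), Polynomial.C (x i) * Polynomial.X ^ q ^ i)
    (hnm : n ≤ m) :
    ∃ b : Fin (q ^ n) → R[X],
      ∀ g : R[X], ∃! c : Fin (q ^ n) → R[X],
        g = ∑ i : Fin (q ^ n), Polynomial.aeval f (c i) * b i := by
  have hq2 : 2 ≤ q := hq ▸ Fintype.one_lt_card
  set p : R[X] := ∑ i ∈ Finset.range (n + 1), C (x i) * X ^ q ^ i
  have hp_coeff : p.coeff (q ^ n) = x n := by
    simp [p, (Nat.pow_right_injective hq2).eq_iff]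
  have hp_deg : p.natDegree ≤ q ^ n :=
    natDegree_sum_le_of_forall_le _ _ fun i hi => (natDegree_C_mul_X_pow_le _ _).trans
      (Nat.pow_le_pow_right (by omega) (Nat.lt_succ_iff.mp (Finset.mem_range.mp hi)))
  set N : Ideal R := Ideal.span (x '' Set.Ioc n m)
  have hN : IsNilpotent N :=
    (Ideal.FG.isNilpotent_iff_le_nilradical (Submodule.fg_span ((Set.finite_Ioc n m).image x))).mpr
      (Ideal.span_le.mpr (by rintro _ ⟨i, hi, rfl⟩; exact mem_nilradical.mpr (hnil i hi.1)))
  have hfp : f - p ∈ N.map C := by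
    rw [hf, ← Finset.sum_range_add_sum_Ico _ (show n + 1 ≤ m + 1 by omega), add_sub_cancel_left]
    refine Ideal.sum_mem _ fun i hi => Ideal.mul_mem_right _ _
      (Ideal.mem_map_of_mem _ (Ideal.subset_span ⟨i, ?_, rfl⟩))
    rw [Finset.mem_Ico] at hi
    exact ⟨by omega, by omega⟩
  have hΦ := bijective_sumAevalMulXPow_of_sub_mem (pow_pos (by omega) n) (hp_coeff ▸ hxn) hp_deg
    hN hfp
  refine ⟨fun i => X ^ (i : ℕ), fun g => ?_⟩
  simpa only [eq_comm, sumAevalMulXPow_apply] using hΦ.existsUnique g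
end

section
/- Let R be a discrete valuation ring with fraction field Q and G a finite group acting on R[[X]] by R-algebra automorphisms with g(X) = (unit)·X for every g. If Q((X))^G = Q((Y)) with Y = ∏_{g∈G} g(X), then R[[X]]^G = R[[Y]], since both are integrally closed in Q((Y)) ⊆ Q((X)) and one contains the other. -/
open PowerSeries Finset
open HahnSeries (ofPowerSeries ofPowerSeries_apply_coeff ofPowerSeries_C)

/-!
Write `Y = U * X ^ k` with `U` a unit and `k = |G|`. Every `Y`-adic series `∑ cᵢ Yⁱ` over `R` is
invariant, since `G` fixes `Y` and the constants and `⋂ₙ (Yⁿ) = 0`. Conversely, if `f` is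
invariant then so is its image in `Q((X))`, hence `Yʲ f = ∑ cᵢ Yⁱ` over `Q` for some `j`.
Comparing lowest terms gives `cᵢ = 0` for `i < j` and `f ≡ f(0) mod Y` over `Q`, hence over `R`;
the quotient `(f - f(0)) / Y` is again invariant, and peeling off constant terms repeatedly
produces the `Y`-adic expansion of `f`.
-/

theorem pow_min_dvd_sum_range_sub_sum_range {A : Type*} [CommRing A] (y : A) (a : ℕ → A)
    (m n : ℕ) : y ^ min m n ∣ ∑ i ∈ range m, a i * y ^ i - ∑ i ∈ range n, a i * y ^ i := by
  have key : ∀ {m n : ℕ}, m ≤ n →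
      y ^ m ∣ ∑ i ∈ range n, a i * y ^ i - ∑ i ∈ range m, a i * y ^ i := fun h => by
    rw [← sum_Ico_eq_sub _ h]
    exact dvd_sum fun i hi => (pow_dvd_pow y (mem_Ico.1 hi).1).mul_left _
  rcases le_total m n with h | h
  · rw [min_eq_left h, ← neg_sub, dvd_neg]
    exact key h
  · rw [min_eq_right h]
    exact key h

namespace PowerSeries

variable {S : Type*} [CommRing S]

/-- `f = ∑ cᵢ Yⁱ` `Y`-adically, i.e. `f ∈ S[[Y]]`. -/
def HasExpansion (Y : S⟦X⟧) (c : ℕ → S) (f : S⟦X⟧) : Prop :=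
  ∀ n, Y ^ n ∣ f - ∑ i ∈ range n, C (c i) * Y ^ i

theorem eq_zero_of_forall_pow_dvd {Y f : S⟦X⟧} (hXY : X ∣ Y) (h : ∀ n, Y ^ n ∣ f) : f = 0 := by
  ext n
  exact X_pow_dvd_iff.1 ((pow_dvd_pow_of_dvd hXY (n + 1)).trans (h (n + 1))) n n.lt_succ_self

section UnitMulXPow

variable {Y : S⟦X⟧} {U : S⟦X⟧ˣ} {k : ℕ}

theorem X_pow_mul_dvd_pow_of_eq_mul_X_pow (hY : Y = (U : S⟦X⟧) * X ^ k) (n : ℕ) :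
    X ^ (k * n) ∣ Y ^ n := by
  rw [hY, mul_pow, pow_mul]
  exact dvd_mul_left _ _

theorem hasExpansion_iff_forall_coeff_eq (hk : 0 < k) (hY : Y = (U : S⟦X⟧) * X ^ k)
    (c : ℕ → S) (f : S⟦X⟧) :
    HasExpansion Y c f ↔
      ∀ n, coeff n f = coeff n (∑ i ∈ range (n + 1), C (c i) * Y ^ i) := by
  constructor
  · intro h n
    have hdvd : X ^ (n + 1) ∣ f - ∑ i ∈ range (n + 1), C (c i) * Y ^ i :=
      (pow_dvd_pow X (Nat.le_mul_of_pos_left _ hk)).trans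
        ((X_pow_mul_dvd_pow_of_eq_mul_X_pow hY _).trans (h (n + 1)))
    have hn := X_pow_dvd_iff.1 hdvd n n.lt_succ_self
    rwa [map_sub, sub_eq_zero] at hn
  · intro h n
    have hYn : Y ^ n = ((U ^ n : S⟦X⟧ˣ) : S⟦X⟧) * X ^ (k * n) := by
      rw [hY, mul_pow, pow_mul, Units.val_pow_eq_pow_val]
    rw [hYn, Units.mul_left_dvd, X_pow_dvd_iff]
    intro m hm
    rw [map_sub, h m, ← map_sub]
    refine X_pow_dvd_iff.1 ((X_pow_mul_dvd_pow_of_eq_mul_X_pow hY _).trans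
      (pow_min_dvd_sum_range_sub_sum_range Y _ (m + 1) n)) m ?_
    rcases min_cases (m + 1) n with ⟨h1, -⟩ | ⟨h1, -⟩ <;> rw [h1] <;> nlinarith

end UnitMulXPow

theorem exists_hasExpansion_of_forall_mem {A : Set S⟦X⟧} (Y : S⟦X⟧)
    (hA : ∀ a ∈ A, ∃ b ∈ A, a = C (constantCoeff a) + Y * b) {f : S⟦X⟧} (hf : f ∈ A) :
    ∃ c, HasExpansion Y c f := by
  choose! next hnextA hnext using hA
  have hmem : ∀ n, next^[n] f ∈ A := by
    intro n
    induction n with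
    | zero => exact hf
    | succ n ih => exact Function.iterate_succ_apply' next n f ▸ hnextA _ ih
  refine ⟨fun i => constantCoeff (next^[i] f), fun n => ⟨next^[n] f, ?_⟩⟩
  induction n with
  | zero => simp
  | succ n ih =>
    rw [sum_range_succ, Function.iterate_succ_apply', pow_succ]
    linear_combination ih + Y ^ n * hnext _ (hmem n)

theorem HasExpansion.algHom_apply_eq_self {Y f : S⟦X⟧} {c : ℕ → S} (h : HasExpansion Y c f)
    (hXY : X ∣ Y) (φ : S⟦X⟧ →ₐ[S] S⟦X⟧) (hφY : φ Y = Y) : φ f = f := by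
  refine sub_eq_zero.1 (eq_zero_of_forall_pow_dvd hXY fun n => ?_)
  have hC : ∀ r, φ (C r) = C r := φ.commutes
  have hsum : φ (∑ i ∈ range n, C (c i) * Y ^ i) = ∑ i ∈ range n, C (c i) * Y ^ i := by
    simp only [map_sum, map_mul, map_pow, hC, hφY]
  have hφn : φ (Y ^ n) = Y ^ n := by rw [map_pow, hφY]
  have hsplit : φ f - f =
      φ (f - ∑ i ∈ range n, C (c i) * Y ^ i) - (f - ∑ i ∈ range n, C (c i) * Y ^ i) := by
    rw [map_sub, hsum]
    ring
  exact hsplit ▸ dvd_sub (hφn ▸ map_dvd φ (h n)) (h n)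

section IsDomain

variable [IsDomain S] {Z : S⟦X⟧}

theorem eq_zero_of_pow_dvd_sum_range (hZ0 : constantCoeff Z = 0) (hZ : Z ≠ 0) :
    ∀ (j : ℕ) (c : ℕ → S), Z ^ j ∣ ∑ i ∈ range j, C (c i) * Z ^ i → ∀ i < j, c i = 0
  | 0, _, _, _, hi => absurd hi (Nat.not_lt_zero _)
  | j + 1, c, h, i, hi => by
    have hsplit : ∑ i ∈ range (j + 1), C (c i) * Z ^ i
        = Z * ∑ i ∈ range j, C (c (i + 1)) * Z ^ i + C (c 0) := by
      rw [sum_range_succ', mul_sum, pow_zero, mul_one]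
      exact congrArg (· + _) (sum_congr rfl fun i _ => by ring)
    rw [hsplit] at h
    have hc0 : c 0 = 0 := by
      have hdvd : Z ∣ C (c 0) :=
        (dvd_add_right (dvd_mul_right _ _)).1 ((dvd_pow_self Z j.succ_ne_zero).trans h)
      simpa using X_dvd_iff.1 ((X_dvd_iff.2 hZ0).trans hdvd)
    rw [hc0, map_zero, add_zero, pow_succ', mul_dvd_mul_iff_left hZ] at h
    rcases i with _ | i
    · exact hc0
    · exact eq_zero_of_pow_dvd_sum_range hZ0 hZ j (fun i => c (i + 1)) h i (by omega)

theorem HasExpansion.dvd_sub_C_constantCoeff (hZ0 : constantCoeff Z = 0) (hZ : Z ≠ 0) {j : ℕ}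
    {c : ℕ → S} {F : S⟦X⟧} (h : HasExpansion Z c (Z ^ j * F)) :
    Z ∣ F - C (constantCoeff F) := by
  have hlow : ∑ i ∈ range j, C (c i) * Z ^ i
      = Z ^ j * (F - C (c j)) - (Z ^ j * F - ∑ i ∈ range (j + 1), C (c i) * Z ^ i) := by
    rw [sum_range_succ]
    ring
  have hc : ∀ i < j, c i = 0 := eq_zero_of_pow_dvd_sum_range hZ0 hZ j c
    (hlow ▸ dvd_sub (dvd_mul_right _ _) ((pow_dvd_pow Z j.le_succ).trans (h (j + 1))))
  rw [sum_eq_zero fun i hi => by rw [hc i (mem_range.1 hi), map_zero, zero_mul], eq_comm,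
    sub_eq_zero] at hlow
  have hcj : Z ∣ F - C (c j) := by
    rw [← mul_dvd_mul_iff_left (pow_ne_zero j hZ), ← pow_succ, hlow]
    exact h (j + 1)
  have hF0 : constantCoeff F = c j := by
    simpa [sub_eq_zero] using X_dvd_iff.1 ((X_dvd_iff.2 hZ0).trans hcj)
  rwa [hF0]

end IsDomain

section Map

variable {R K : Type*} [CommRing R] [CommRing K] {φ : R →+* K}

theorem dvd_of_map_dvd_map (hφ : Function.Injective φ) {Y g : R⟦X⟧} {U : R⟦X⟧ˣ} {k : ℕ}
    (hY : Y = (U : R⟦X⟧) * X ^ k) (h : map φ Y ∣ map φ g) : Y ∣ g := by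
  rw [hY, map_mul, map_pow, map_X, (U.isUnit.map (map φ)).mul_left_dvd, X_pow_dvd_iff] at h
  rw [hY, Units.mul_left_dvd, X_pow_dvd_iff]
  intro m hm
  exact hφ (by simpa using h m hm)

theorem forall_coeff_eq_of_ofPowerSeries {Z F : K⟦X⟧} {j : ℕ} {c : ℕ → K}
    (h : ∀ n : ℤ, (ofPowerSeries ℤ K Z ^ j * ofPowerSeries ℤ K F).coeff n =
      (∑ i ∈ range (n.toNat + 1), HahnSeries.C (c i) * ofPowerSeries ℤ K Z ^ i).coeff n)
    (m : ℕ) : coeff m (Z ^ j * F) = coeff m (∑ i ∈ range (m + 1), C (c i) * Z ^ i) := by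
  rw [← ofPowerSeries_apply_coeff (Γ := ℤ), ← ofPowerSeries_apply_coeff (Γ := ℤ)]
  simpa only [map_mul, map_pow, map_sum, ofPowerSeries_C, Int.toNat_natCast] using h m

theorem dvd_sub_C_constantCoeff_of_ofPowerSeries_map [IsDomain K] (hφ : Function.Injective φ)
    {Y : R⟦X⟧} {U : R⟦X⟧ˣ} {k : ℕ} (hk : 0 < k) (hY : Y = (U : R⟦X⟧) * X ^ k) {f : R⟦X⟧}
    {j : ℕ} {c : ℕ → K}
    (h : ∀ n : ℤ, (ofPowerSeries ℤ K (map φ Y) ^ j * ofPowerSeries ℤ K (map φ f)).coeff n =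
      (∑ i ∈ range (n.toNat + 1), HahnSeries.C (c i) * ofPowerSeries ℤ K (map φ Y) ^ i).coeff n) :
    Y ∣ f - C (constantCoeff f) := by
  have hYφ : map φ Y = ((U.map (map φ).toMonoidHom : K⟦X⟧ˣ) : K⟦X⟧) * X ^ k := by
    simp [hY]
  have hexp : HasExpansion (map φ Y) c (map φ Y ^ j * map φ f) :=
    (hasExpansion_iff_forall_coeff_eq hk hYφ c _).2 (forall_coeff_eq_of_ofPowerSeries h)
  have hZ0 : constantCoeff (map φ Y) = 0 := by simp [hYφ, hk.ne']
  have hZ : map φ Y ≠ 0 := by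
    rw [hYφ]
    exact mul_ne_zero (Units.ne_zero _) (pow_ne_zero _ X_ne_zero)
  refine dvd_of_map_dvd_map hφ hY ?_
  have hmap : map φ f - C (constantCoeff (map φ f)) = map φ (f - C (constantCoeff f)) := by
    rw [map_sub, map_C, ← coeff_zero_eq_constantCoeff_apply, coeff_map,
      coeff_zero_eq_constantCoeff_apply]
  exact hmap ▸ hexp.dvd_sub_C_constantCoeff hZ0 hZ

end Map

end PowerSeries

theorem apply_prod_apply_eq_self {R A G : Type*} [CommSemiring R] [CommSemiring A] [Algebra R A]
    [Group G] [Fintype G] (ρ : G →* (A ≃ₐ[R] A)) (x : A) (g : G) :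
    ρ g (∏ h, ρ h x) = ∏ h, ρ h x := by
  rw [map_prod]
  simp only [← AlgEquiv.mul_apply, ← map_mul]
  exact Fintype.prod_equiv (Equiv.mulLeft g) _ _ fun _ => rfl

theorem invariants_of_power_series_over_dvr_general
    (R : Type*) [CommRing R]
    (Q : Type*) [Field Q] [Algebra R Q] [IsFractionRing R Q]
    (G : Type*) [Group G] [Fintype G]
    (ρ : G →* (PowerSeries R ≃ₐ[R] PowerSeries R))
    (hX : ∀ g : G, ∃ u : (PowerSeries R)ˣ,
      ρ g PowerSeries.X = (u : PowerSeries R) * PowerSeries.X)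
    (σ : G →* RingAut (LaurentSeries Q))
    (ι : PowerSeries R →+* LaurentSeries Q)
    (hι : ι = (HahnSeries.ofPowerSeries ℤ Q).comp (PowerSeries.map (algebraMap R Q)))
    (hcompat : ∀ (g : G) (fs : PowerSeries R), σ g (ι fs) = ι (ρ g fs))
    (Y : PowerSeries R) (hY : Y = ∏ g : G, ρ g PowerSeries.X)
    (hfix : ∀ F : LaurentSeries Q, (∀ g : G, σ g F = F) ↔
      ∃ (j : ℕ) (c : ℕ → Q), ∀ n : ℤ,
        ((ι Y) ^ j * F).coeff n =
          (∑ i ∈ Finset.range (n.toNat + 1), HahnSeries.C (c i) * (ι Y) ^ i).coeff n)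
    (f : PowerSeries R) :
    (∀ g : G, ρ g f = f) ↔
      ∃ c : ℕ → R, ∀ n : ℕ, PowerSeries.coeff n f =
        PowerSeries.coeff n (∑ i ∈ Finset.range (n + 1), PowerSeries.C (c i) * Y ^ i) := by
  choose u hu using hX
  have hk : 0 < Fintype.card G := Fintype.card_pos
  have hYU : Y = ((∏ g, u g : (PowerSeries R)ˣ) : PowerSeries R) * X ^ Fintype.card G := by
    rw [hY, prod_congr rfl fun g _ => hu g, prod_mul_distrib, prod_const, card_univ,
      Units.coe_prod]
  have hρY : ∀ g, ρ g Y = Y := fun g => hY ▸ apply_prod_apply_eq_self ρ X g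
  have hXY : X ∣ Y := hYU ▸ (dvd_pow_self X hk.ne').mul_left _
  have hYreg : IsLeftRegular Y := hYU ▸ (Units.isUnit _).isRegular.left.mul X_pow_mul_injective
  simp_rw [← hasExpansion_iff_forall_coeff_eq hk hYU]
  refine ⟨fun hf => exists_hasExpansion_of_forall_mem (A := {a | ∀ g, ρ g a = a}) Y ?_ hf,
    fun ⟨c, hc⟩ g => hc.algHom_apply_eq_self hXY (ρ g) (hρY g)⟩
  intro a ha
  obtain ⟨j, c, hc⟩ := (hfix (ι a)).1 fun g => by rw [hcompat, ha]
  subst hι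
  obtain ⟨b, hb⟩ :=
    dvd_sub_C_constantCoeff_of_ofPowerSeries_map (IsFractionRing.injective R Q) hk hYU hc
  refine ⟨b, fun g => hYreg ?_, by rw [← hb]; ring⟩
  have hC : ∀ r, ρ g (C r) = C r := (ρ g).commutes
  calc Y * ρ g b = ρ g (Y * b) := by rw [map_mul, hρY]
    _ = Y * b := by rw [← hb, map_sub, ha, hC]

/-- Let `R` be a DVR with fraction field `Q`, and `G` a finite
group acting on `R[[X]]` by `R`-algebra automorphisms with `g(X) = (unit)·X`,
the action extending to `Q((X))`.  If the invariants of `Q((X))` are exactly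
`Q((Y))` with `Y = ∏_{g ∈ G} g(X)` (an element `F` lies in `Q((Y))` iff
`(ιY)^j · F ∈ Q[[Y]]` for some `j`, coefficientwise), then `R[[X]]^G = R[[Y]]`
(again expressed coefficientwise). -/
theorem invariants_of_power_series_over_dvr
    (R : Type*) [CommRing R] [IsDomain R] [IsDiscreteValuationRing R]
    (Q : Type*) [Field Q] [Algebra R Q] [IsFractionRing R Q]
    (G : Type*) [Group G] [Fintype G]
    (ρ : G →* (PowerSeries R ≃ₐ[R] PowerSeries R))
    (hX : ∀ g : G, ∃ u : (PowerSeries R)ˣ,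
      ρ g PowerSeries.X = (u : PowerSeries R) * PowerSeries.X)
    (σ : G →* RingAut (LaurentSeries Q))
    (ι : PowerSeries R →+* LaurentSeries Q)
    (hι : ι = (HahnSeries.ofPowerSeries ℤ Q).comp (PowerSeries.map (algebraMap R Q)))
    (hcompat : ∀ (g : G) (fs : PowerSeries R), σ g (ι fs) = ι (ρ g fs))
    (Y : PowerSeries R) (hY : Y = ∏ g : G, ρ g PowerSeries.X)
    (hfix : ∀ F : LaurentSeries Q, (∀ g : G, σ g F = F) ↔
      ∃ (j : ℕ) (c : ℕ → Q), ∀ n : ℤ,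
        ((ι Y) ^ j * F).coeff n =
          (∑ i ∈ Finset.range (n.toNat + 1), HahnSeries.C (c i) * (ι Y) ^ i).coeff n)
    (f : PowerSeries R) :
    (∀ g : G, ρ g f = f) ↔
      ∃ c : ℕ → R, ∀ n : ℕ, PowerSeries.coeff n f =
        PowerSeries.coeff n (∑ i ∈ Finset.range (n + 1), PowerSeries.C (c i) * Y ^ i) :=
  invariants_of_power_series_over_dvr_general R Q G ρ hX σ ι hι hcompat Y hY hfix f
end
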